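/- Let X ⊆ A^ℤ be a minimal subshift. A monoid morphism c : A* → (ℝ,+) is a letter-coboundary on X if and only if there exists a map ρ : A → ℝ such that c(a) = ρ(b) − ρ(a) for every word ab of length 2 in L(X). -/

import Mathlib

open Filter Topology MeasureTheory

namespace SAdicPaper

variable {A B : Type*}

/-! ### Basic symbolic dynamics on the full shift `ℤ → A` -/

/-- The shift map `S` on the full shift. -/
def shift (x : ℤ → A) : ℤ → A := fun n => x (n + 1)

/-- The iterate `S^k` of the shift, for `k : ℤ`. -/
def shiftIter (k : ℤ) (x : ℤ → A) : ℤ → A := fun n => x (n + k)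

/-- The finite word `x_i x_{i+1} ⋯ x_{i+l-1}`. -/
def window (x : ℤ → A) (i : ℤ) (l : ℕ) : List A :=
  (List.range l).map fun k => x (i + (k : ℤ))

/-- A subshift: a closed shift-invariant subset of the full shift. -/
def IsSubshift [TopologicalSpace A] (X : Set (ℤ → A)) : Prop :=
  IsClosed X ∧ shift '' X = X

/-- The language of a set of bi-infinite sequences: all finite factors of its points. -/
def langOf (X : Set (ℤ → A)) : Set (List A) :=
  {w | ∃ x ∈ X, ∃ i : ℤ, w = window x i w.length}

/-- The (two-sided) orbit of a point under the shift. -/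
def orbit (x : ℤ → A) : Set (ℤ → A) := Set.range fun k : ℤ => shiftIter k x

/-- A minimal subshift: nonempty and every orbit is dense. -/
def IsMinimalSubshift [TopologicalSpace A] (X : Set (ℤ → A)) : Prop :=
  IsSubshift X ∧ X.Nonempty ∧ ∀ x ∈ X, X ⊆ closure (orbit x)

/-- A transitive subshift: some orbit is dense. -/
def IsTransitiveSubshift [TopologicalSpace A] (X : Set (ℤ → A)) : Prop :=
  IsSubshift X ∧ ∃ x ∈ X, X ⊆ closure (orbit x)

/-- `α` is a continuous additive eigenvalue of `(X, S)`: there is a continuous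
`g : X → ℝ/ℤ` with `g (S x) = g x + α (mod ℤ)`. -/
def IsEigenvalue [TopologicalSpace A] (X : Set (ℤ → A)) (α : ℝ) : Prop :=
  ∃ g : (ℤ → A) → AddCircle (1 : ℝ), ContinuousOn g X ∧
    ∀ x ∈ X, g (shift x) = g x + (α : AddCircle (1 : ℝ))

/-- `‖x‖`: distance from a real number to the nearest integer. -/
noncomputable def dnint (x : ℝ) : ℝ := |x - round x|

/-- `{x}`: the centered fractional part, the unique element of `[-1/2, 1/2)`
such that `x + {x}` is an integer. -/
noncomputable def cfrac (x : ℝ) : ℝ := (⌈x - 1 / 2⌉ : ℤ) - x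

/-- The cylinder `[u] = {x ∈ X : x_{[0,|u|)} = u}`. -/
def cyl (X : Set (ℤ → A)) (u : List A) : Set (ℤ → A) :=
  {x ∈ X | window x 0 u.length = u}

/-- The factor complexity `p_X(n)`. -/
noncomputable def pcomplex (X : Set (ℤ → A)) (n : ℕ) : ℕ :=
  Set.ncard {w : List A | w ∈ langOf X ∧ w.length = n}

/-! ### Letter-coboundaries -/

/-- The extension of a map `c : A → ℝ` to the monoid morphism `A* → (ℝ, +)`. -/
def wsum (c : A → ℝ) (w : List A) : ℝ := (w.map c).sum

/-- `w` is a return word to the letter `a` in `X`: `w ++ [a] ∈ L(X)` and `w ++ [a]`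
contains exactly two occurrences of `a`, one as a prefix and one as a suffix. -/
def IsReturnWord (X : Set (ℤ → A)) (a : A) (w : List A) : Prop :=
  w ++ [a] ∈ langOf X ∧ w.head? = some a ∧
    ∀ (i : ℕ) (h : i < w.length), 0 < i → w.get ⟨i, h⟩ ≠ a

/-- A letter-coboundary on `X` (identified with its values on letters):
a morphism `A* → (ℝ, +)` vanishing on all return words to letters. -/
def IsLetterCoboundary (X : Set (ℤ → A)) (c : A → ℝ) : Prop :=
  ∀ (a : A) (w : List A), IsReturnWord X a w → wsum c w = 0

/-- `w` is a return word to the (nonempty) word `u` in `X`. -/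
def IsReturnWordTo (X : Set (ℤ → A)) (u w : List A) : Prop :=
  w ≠ [] ∧ (w ++ u) ∈ langOf X ∧ u <+: (w ++ u) ∧
    ∀ i : ℕ, ((w ++ u).drop i).take u.length = u → i + u.length ≤ (w ++ u).length →
      i = 0 ∨ i = w.length

/-! ### Extension graphs -/

/-- Vertices of the extension graph of `w`: two copies of the alphabet, restricted to the
letters that extend `w` on the corresponding side. -/
def extVertex (X : Set (ℤ → A)) (w : List A) : A ⊕ A → Prop
  | Sum.inl a => (a :: w) ∈ langOf X
  | Sum.inr b => (w ++ [b]) ∈ langOf X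

/-- The edge relation of the extension graph: `a_L — b_R` when `a w b ∈ L(X)`. -/
def extAdjRaw (X : Set (ℤ → A)) (w : List A) (u v : A ⊕ A) : Prop :=
  ∃ a b, u = Sum.inl a ∧ v = Sum.inr b ∧ (a :: (w ++ [b])) ∈ langOf X

/-- The extension graph `Γ_X(w)` of a word `w` in `X`. -/
def extGraph (X : Set (ℤ → A)) (w : List A) :
    SimpleGraph {v : A ⊕ A // extVertex X w v} where
  Adj u v := extAdjRaw X w u.1 v.1 ∨ extAdjRaw X w v.1 u.1
  symm := ⟨fun u v h => Or.symm h⟩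
  loopless := ⟨by
    rintro ⟨v, hv⟩ h
    rcases h with ⟨a, b, h1, h2, -⟩ | ⟨a, b, h1, h2, -⟩ <;> (rw [h1] at h2; simp at h2)⟩

/-- The total number of connected components of the extension graphs of all
words of length `m` in `L(X)`. -/
noncomputable def totalComponents (X : Set (ℤ → A)) (m : ℕ) : ℕ :=
  Nat.card (Σ w : {w : List A // w ∈ langOf X ∧ w.length = m},
    (extGraph X w.1).ConnectedComponent)

/-! ### The vector space of letter-coboundaries -/

lemma wsum_zero (w : List A) : wsum (0 : A → ℝ) w = 0 := by
  induction w with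
  | nil => rfl
  | cons a t ih => simp [wsum, List.map_cons, List.sum_cons] at ih ⊢; exact ih

lemma wsum_add (c d : A → ℝ) (w : List A) :
    wsum (c + d) w = wsum c w + wsum d w := by
  induction w with
  | nil => simp [wsum]
  | cons a t ih =>
      simp only [wsum, List.map_cons, List.sum_cons, Pi.add_apply] at ih ⊢
      rw [ih]; ring

lemma wsum_smul (r : ℝ) (c : A → ℝ) (w : List A) :
    wsum (r • c) w = r * wsum c w := by
  induction w with
  | nil => simp [wsum]
  | cons a t ih =>
      simp only [wsum, List.map_cons, List.sum_cons, Pi.smul_apply, smul_eq_mul] at ih ⊢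
      rw [ih]; ring

/-- The `ℝ`-vector space `C_X` of letter-coboundaries on `X`. -/
def cobSpace (X : Set (ℤ → A)) : Submodule ℝ (A → ℝ) where
  carrier := {c | IsLetterCoboundary X c}
  zero_mem' := fun _ w _ => wsum_zero w
  add_mem' := by
    intro c d hc hd a w hw
    rw [wsum_add, hc a w hw, hd a w hw, add_zero]
  smul_mem' := by
    intro r c hc a w hw
    rw [wsum_smul, hc a w hw, mul_zero]

/-! ### Directive sequences -/

variable {Alph : ℕ → Type*}

/-- `seg τ n k = τ_{n,n+k} = τ_n ∘ τ_{n+1} ∘ ⋯ ∘ τ_{n+k-1}`, applied to a letter. -/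
def seg (τ : ∀ n, Alph (n + 1) → List (Alph n)) (n : ℕ) :
    (k : ℕ) → Alph (n + k) → List (Alph n)
  | 0, a => [a]
  | k + 1, a => (τ (n + k) a).flatMap (seg τ n k)

/-- `toZero τ n = τ_{0,n}`, applied to a letter. -/
def toZero (τ : ∀ n, Alph (n + 1) → List (Alph n)) :
    (n : ℕ) → Alph n → List (Alph 0)
  | 0, a => [a]
  | n + 1, a => (τ n a).flatMap (toZero τ n)

/-- The height `h_n(u) = |τ_{0,n}(u)|` (so `h_0(u) = |u|`). -/
def heightW (τ : ∀ n, Alph (n + 1) → List (Alph n)) (n : ℕ) (u : List (Alph n)) : ℕ :=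
  (u.flatMap (toZero τ n)).length

/-- Every `τ_n` is a substitution: non-erasing and letter-onto. -/
def IsDirective (τ : ∀ n, Alph (n + 1) → List (Alph n)) : Prop :=
  ∀ n, (∀ a : Alph (n + 1), τ n a ≠ []) ∧ ∀ b : Alph n, ∃ a : Alph (n + 1), b ∈ τ n a

/-- The level-`n` language `L^{(n)}_τ`: the words occurring in some `τ_{n,m}(a)`, `m > n`. -/
def levelLang (τ : ∀ n, Alph (n + 1) → List (Alph n)) (n : ℕ) : Set (List (Alph n)) :=
  {w | ∃ k : ℕ, 0 < k ∧ ∃ a : Alph (n + k), w <:+: seg τ n k a}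

/-- The level-`n` subshift `X^{(n)}_τ`: the points all of whose factors lie in `L^{(n)}_τ`.
`X_τ = levelShift τ 0`. -/
def levelShift (τ : ∀ n, Alph (n + 1) → List (Alph n)) (n : ℕ) : Set (ℤ → Alph n) :=
  {x | ∀ (i : ℤ) (l : ℕ), window x i l ∈ levelLang τ n}

/-- Primitivity of a directive sequence. -/
def IsPrimitiveSeq (τ : ∀ n, Alph (n + 1) → List (Alph n)) : Prop :=
  ∀ n, ∃ k, 0 < k ∧ ∀ (a : Alph (n + k)) (b : Alph n), b ∈ seg τ n k a

/-- Positivity of a directive sequence: every letter of `A_n` occurs in every `τ_n(b)`. -/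
def IsPositiveSeq (τ : ∀ n, Alph (n + 1) → List (Alph n)) : Prop :=
  ∀ (n : ℕ) (b : Alph (n + 1)) (a : Alph n), a ∈ τ n b

/-- `y` is the image of the bi-infinite sequence `x` under the substitution `σ`,
aligned so that `σ(x_0)` starts at position `0`. -/
def SubstPoint (σ : B → List A) (x : ℤ → B) (y : ℤ → A) : Prop :=
  ∀ m : ℕ,
    window y (-(∑ t ∈ Finset.range m, ((σ (x (-1 - (t : ℤ)))).length : ℤ)))
        ((window x (-(m : ℤ)) (2 * m + 1)).flatMap σ).length
      = (window x (-(m : ℤ)) (2 * m + 1)).flatMap σ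

/-- The base `B_n(a) = {τ_{0,n}(x) : x ∈ X^{(n)}_τ, x_0 = a}` of the Kakutani–Rokhlin tower. -/
def baseSet (τ : ∀ n, Alph (n + 1) → List (Alph n)) (n : ℕ) (a : Alph n) :
    Set (ℤ → Alph 0) :=
  {y | ∃ x ∈ levelShift τ n, x 0 = a ∧ SubstPoint (toZero τ n) x y}

/-- Recognizability: for every `n ≥ 1`, the sets `S^k B_n(a)`, `a ∈ A_n`,
`0 ≤ k < h_n(a)`, are pairwise disjoint. -/
def IsRecognizable (τ : ∀ n, Alph (n + 1) → List (Alph n)) : Prop :=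
  ∀ n : ℕ, 1 ≤ n → ∀ (a a' : Alph n) (k k' : ℕ),
    k < heightW τ n [a] → k' < heightW τ n [a'] → ¬(a = a' ∧ k = k') →
    Disjoint (shiftIter (k : ℤ) '' baseSet τ n a) (shiftIter (k' : ℤ) '' baseSet τ n a')

/-- `min_{a ∈ A_n} |τ_{0,n}(a)| → ∞`. -/
def IsEverywhereGrowing (τ : ∀ n, Alph (n + 1) → List (Alph n)) : Prop :=
  ∀ N : ℕ, ∃ M : ℕ, ∀ n, M ≤ n → ∀ a : Alph n, N ≤ (toZero τ n a).length

/-- Decisiveness of an everywhere growing directive sequence. -/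
def IsDecisive (τ : ∀ n, Alph (n + 1) → List (Alph n)) : Prop :=
  IsEverywhereGrowing τ ∧
  ∀ n : ℕ, ∃ l r : Alph (n + 1) → Alph n,
    ∀ a b : Alph (n + 1), [a, b] ∈ langOf (levelShift τ (n + 1)) →
      (τ n b).head? = some (r a) ∧ (τ n a).getLast? = some (l b)

/-- Unimodularity: every incidence matrix has determinant `±1`. -/
def IsUnimodularSeq [∀ n, Fintype (Alph n)] [∀ n, DecidableEq (Alph n)]
    (τ : ∀ n, Alph (n + 1) → List (Alph n)) : Prop :=
  ∀ n, ∃ e : Alph n ≃ Alph (n + 1),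
    (Matrix.det (Matrix.of fun b a : Alph n => ((τ n (e a)).count b : ℤ))).natAbs = 1

/-! ### Single substitutions -/

/-- Iteration `τ^m` of a substitution on a single alphabet, applied to a letter. -/
def substPow (τ : A → List A) : ℕ → A → List A
  | 0, a => [a]
  | k + 1, a => (τ a).flatMap (substPow τ k)

/-- The substitutive subshift `X_τ` generated by the constant directive sequence `(τ)`. -/
def substShift (τ : A → List A) : Set (ℤ → A) :=
  {x | ∀ (i : ℤ) (l : ℕ), ∃ m : ℕ, 1 ≤ m ∧ ∃ a : A, window x i l <:+: substPow τ m a}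

/-- The incidence matrix of a substitution (with real entries). -/
def incMat [DecidableEq A] (τ : A → List A) : Matrix A A ℝ :=
  Matrix.of fun b a => ((τ a).count b : ℝ)

/-- A primitive substitution: some power of its incidence matrix is strictly positive. -/
def IsPrimitiveSubst [Fintype A] [DecidableEq A] (τ : A → List A) : Prop :=
  ∃ k : ℕ, 0 < k ∧ ∀ b a : A, 0 < (incMat τ ^ k) b a

/-- Aperiodicity: `X_τ` contains no shift-periodic point. -/
def IsAperiodicSubst (τ : A → List A) : Prop :=
  ∀ x ∈ substShift τ, ∀ p : ℕ, 0 < p → shiftIter (p : ℤ) x ≠ x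

/-- The stable space `V_{X_τ}` of row vectors `v` with `v M_τ^n → 0`. -/
def stableSpace [Fintype A] [DecidableEq A] (τ : A → List A) : Submodule ℝ (A → ℝ) where
  carrier := {v | Tendsto (fun n : ℕ => Matrix.vecMul v (incMat τ ^ n)) atTop (nhds 0)}
  zero_mem' := by
    simp only [Set.mem_setOf_eq, Matrix.zero_vecMul]
    exact tendsto_const_nhds
  add_mem' := by
    intro u v hu hv
    have := hu.add hv
    simp only [Set.mem_setOf_eq] at *
    simpa [Matrix.add_vecMul] using this
  smul_mem' := by
    intro r v hv
    have := hv.const_smul r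
    simp only [Set.mem_setOf_eq] at *
    simpa [Matrix.smul_vecMul] using this

/-- `X` is balanced on the letter `a`. -/
def IsBalancedOnLetter [DecidableEq A] (X : Set (ℤ → A)) (a : A) : Prop :=
  ∃ C : ℕ, 0 < C ∧ ∀ w ∈ langOf X, ∀ w' ∈ langOf X, w.length = w'.length →
    |(w.count a : ℤ) - (w'.count a : ℤ)| ≤ (C : ℤ)

/-- `X` is balanced on letters. -/
def IsBalancedOnLetters [DecidableEq A] (X : Set (ℤ → A)) : Prop :=
  ∀ a : A, IsBalancedOnLetter X a

/-- A function `f : X → ℝ` is balanced on a (minimal) subshift `X`. -/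
def IsBalancedFn (X : Set (ℤ → A)) (f : (ℤ → A) → ℝ) : Prop :=
  ∃ C : ℝ, 0 < C ∧ ∀ x ∈ X, ∀ y ∈ X, ∀ n : ℕ, 1 ≤ n →
    |∑ i ∈ Finset.range (n + 1), (f (shiftIter (i : ℤ) x) - f (shiftIter (i : ℤ) y))| ≤ C

/-! A letter-coboundary vanishes on the factor `x_m ⋯ x_{n-1}` of any point `x ∈ X` with
`x_m = x_n`: cutting at the intermediate occurrences of `x_m` splits it into return words.
So a potential `T : ℤ → ℝ` with `T (n + 1) = T n + c (x n)` depends only on the letter `x n`,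
and this defines `ρ`; by minimality every two-letter word of `L(X)` occurs in `x`.
Conversely, `c` telescopes along factors of points of `X` to `ρ (last) - ρ (first)`,
which vanishes on `w a` for a return word `w` to `a`. -/

section Window

-- As written, `window` maps over `List.range l` coerced to `List ℤ`.
lemma window_eq_map (x : ℤ → A) (i : ℤ) (l : ℕ) :
    window x i l = (List.range l).map fun k : ℕ => x (i + k) := by
  simp only [window, List.pure_def, List.bind_eq_flatMap, ← List.map_eq_flatMap, List.map_map]
  rfl

@[simp]
lemma length_window (x : ℤ → A) (i : ℤ) (l : ℕ) : (window x i l).length = l := by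
  simp [window_eq_map]

lemma window_succ (x : ℤ → A) (i : ℤ) (l : ℕ) :
    window x i (l + 1) = window x i l ++ [x (i + l)] := by
  simp [window_eq_map, List.range_succ]

lemma window_succ_eq_cons (x : ℤ → A) (i : ℤ) (l : ℕ) :
    window x i (l + 1) = x i :: window x (i + 1) l := by
  simp only [window_eq_map, List.range_succ_eq_map, List.map_cons, List.map_map]
  congr 2
  · simp
  · ext k
    simp only [Function.comp_apply]
    push_cast
    ring_nf

lemma window_add (x : ℤ → A) (i : ℤ) (p q : ℕ) :
    window x i (p + q) = window x i p ++ window x (i + p) q := by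
  induction q with
  | zero => simp [window_eq_map]
  | succ q ih =>
    rw [← add_assoc, window_succ, ih, window_succ, List.append_assoc]
    push_cast
    ring_nf

lemma window_two (x : ℤ → A) (i : ℤ) : window x i 2 = [x i, x (i + 1)] := by
  simp [window_eq_map, List.range_succ]

lemma window_shiftIter (x : ℤ → A) (k i : ℤ) (l : ℕ) :
    window (shiftIter k x) i l = window x (i + k) l := by
  simp only [window_eq_map, shiftIter, add_right_comm]

lemma window_mem_langOf {X : Set (ℤ → A)} {x : ℤ → A} (hx : x ∈ X) (i : ℤ) (l : ℕ) :
    window x i l ∈ langOf X :=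
  ⟨x, hx, i, by rw [length_window]⟩

lemma isOpen_setOf_window_eq [TopologicalSpace A] [DiscreteTopology A] (y : ℤ → A) (i : ℤ)
    (l : ℕ) : IsOpen {z : ℤ → A | window z i l = window y i l} := by
  have hU : {z : ℤ → A | window z i l = window y i l} =
      ⋂ k ∈ Finset.range l, (fun z : ℤ → A => z (i + k)) ⁻¹' {y (i + k)} := by
    ext z
    simp [window_eq_map, List.map_inj_left]
  rw [hU]
  exact isOpen_biInter_finset fun k _ => (continuous_apply _).isOpen_preimage _ (isOpen_discrete _)

lemma wsum_append (c : A → ℝ) (u v : List A) : wsum c (u ++ v) = wsum c u + wsum c v := by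
  simp [wsum]

end Window

lemma exists_forall_add_one_eq_add {G : Type*} [AddCommGroup G] (f : ℤ → G) :
    ∃ T : ℤ → G, ∀ n, T (n + 1) = T n + f n := by
  refine ⟨fun n => ∑ k ∈ Finset.Ico 0 n, f k - ∑ k ∈ Finset.Ico n 0, f k, fun n => ?_⟩
  rcases le_or_gt 0 n with hn | hn
  · simp [← Finset.sum_Ico_add_eq_sum_Ico_add_one hn, Finset.Ico_eq_empty_of_le, hn,
      show (0 : ℤ) ≤ n + 1 by omega]
  · simp only
    rw [← Finset.insert_Ico_add_one_left_eq_Ico hn, Finset.sum_insert (by simp),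
      Finset.Ico_eq_empty_of_le hn.le, Finset.Ico_eq_empty_of_le (by omega)]
    simp

section Coboundary

variable {X : Set (ℤ → A)} {c : A → ℝ} {x : ℤ → A}

lemma IsMinimalSubshift.exists_window_eq [TopologicalSpace A] [DiscreteTopology A]
    (hX : IsMinimalSubshift X) (hx : x ∈ X) {w : List A} (hw : w ∈ langOf X) :
    ∃ i, window x i w.length = w := by
  obtain ⟨y, hy, j, hwy⟩ := hw
  obtain ⟨z, hzU, k, rfl⟩ := mem_closure_iff.mp (hX.2.2 x hx hy) _
    (isOpen_setOf_window_eq y j w.length) rfl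
  exact ⟨j + k, by rw [← window_shiftIter]; exact hzU.trans hwy.symm⟩

lemma IsReturnWord.exists_window_eq {a : A} {w : List A} (h : IsReturnWord X a w) :
    ∃ y ∈ X, ∃ i, w = window y i w.length ∧ y i = a ∧ y (i + w.length) = a := by
  obtain ⟨⟨y, hy, i, hw⟩, hhead, -⟩ := h
  rw [List.length_append, List.length_singleton, window_succ] at hw
  obtain ⟨hwy, hay⟩ := List.append_inj hw (length_window ..).symm
  refine ⟨y, hy, i, hwy, ?_, (List.singleton_inj.mp hay).symm⟩
  rw [hwy] at hhead
  cases hl : w.length with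
  | zero => simp [hl, window_eq_map] at hhead
  | succ l => simpa [hl, window_succ_eq_cons] using hhead

lemma IsLetterCoboundary.wsum_window_eq_zero (hc : IsLetterCoboundary X c) (hx : x ∈ X)
    (l : ℕ) (m : ℤ) (hl : x (m + l) = x m) : wsum c (window x m l) = 0 := by
  induction l using Nat.strong_induction_on generalizing m with
  | _ l ih =>
  by_cases hmid : ∃ j : ℕ, 0 < j ∧ j < l ∧ x (m + j) = x m
  · obtain ⟨j, hj0, hjl, hj⟩ := hmid
    obtain ⟨d, rfl⟩ := Nat.exists_eq_add_of_lt hjl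
    rw [show j + d + 1 = j + (d + 1) by ring, window_add, wsum_append, ih j (by omega) m hj,
      ih (d + 1) (by omega) (m + j) (by rw [hj, ← hl]; push_cast; ring_nf), add_zero]
  · push Not at hmid
    cases l with
    | zero => rfl
    | succ l =>
      refine hc (x m) _ ⟨?_, by simp [window_succ_eq_cons], fun i hi hi0 => ?_⟩
      · rw [← hl, ← window_succ]
        exact window_mem_langOf hx m (l + 1 + 1)
      · simpa [window_eq_map] using hmid i hi0 (by simpa using hi)

lemma wsum_window_eq_sub {T : ℤ → ℝ} (hT : ∀ n, T (n + 1) = T n + c (x n)) (m : ℤ) (l : ℕ) :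
    wsum c (window x m l) = T (m + l) - T m := by
  induction l with
  | zero => simp [window_eq_map, wsum]
  | succ l ih =>
    rw [window_succ, wsum_append, ih, Nat.cast_succ, ← add_assoc, hT]
    simp only [wsum, List.map_cons, List.map_nil, List.sum_cons, List.sum_nil]
    ring

lemma IsLetterCoboundary.factorsThrough (hc : IsLetterCoboundary X c) (hx : x ∈ X)
    {T : ℤ → ℝ} (hT : ∀ n, T (n + 1) = T n + c (x n)) : Function.FactorsThrough T x := by
  have key : ∀ m n, m ≤ n → x m = x n → T m = T n := fun m n hmn hxmn => by
    obtain ⟨l, rfl⟩ := Int.exists_add_of_le hmn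
    have := hc.wsum_window_eq_zero hx l m hxmn.symm
    rw [wsum_window_eq_sub hT] at this
    linarith
  intro m n hmn
  rcases le_total m n with h | h
  exacts [key m n h hmn, (key n m h hmn.symm).symm]

lemma IsLetterCoboundary.exists_rho (hc : IsLetterCoboundary X c) (hx : x ∈ X) :
    ∃ ρ : A → ℝ, ∀ n, c (x n) = ρ (x (n + 1)) - ρ (x n) := by
  obtain ⟨T, hT⟩ := exists_forall_add_one_eq_add fun n => c (x n)
  have hfac := hc.factorsThrough hx hT
  refine ⟨Function.extend x T 0, fun n => ?_⟩
  rw [hfac.extend_apply, hfac.extend_apply, hT]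
  simp

end Coboundary

theorem letterCoboundary_iff_exists_rho_general
    {A : Type*} [TopologicalSpace A] [DiscreteTopology A]
    (X : Set (ℤ → A)) (hX : IsMinimalSubshift X) (c : A → ℝ) :
    IsLetterCoboundary X c ↔
      ∃ ρ : A → ℝ, ∀ a b : A, [a, b] ∈ langOf X → c a = ρ b - ρ a := by
  constructor
  · intro hc
    obtain ⟨x, hx⟩ := hX.2.1
    obtain ⟨ρ, hρ⟩ := hc.exists_rho hx
    refine ⟨ρ, fun a b hab => ?_⟩
    obtain ⟨n, hn⟩ := hX.exists_window_eq hx hab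
    rw [List.length_cons, List.length_singleton, window_two] at hn
    simp only [List.cons.injEq] at hn
    obtain ⟨rfl, rfl, -⟩ := hn
    exact hρ n
  · rintro ⟨ρ, hρ⟩ a w hw
    obtain ⟨y, hy, i, hwy, hya, hya'⟩ := hw.exists_window_eq
    have hstep : ∀ n, ρ (y (n + 1)) = ρ (y n) + c (y n) := fun n => by
      rw [hρ _ _ (window_two y n ▸ window_mem_langOf hy n 2)]
      ring
    rw [hwy, wsum_window_eq_sub (T := fun n => ρ (y n)) hstep, hya, hya', sub_self]

/-- **Lemma 3.4.** Let `X` be a minimal subshift.  A morphism `c : A* → (ℝ, +)` is a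
letter-coboundary on `X` iff there is `ρ : A → ℝ` with `c(a) = ρ(b) − ρ(a)` for every
length-2 word `ab ∈ L(X)`. -/
theorem letterCoboundary_iff_exists_rho
    {A : Type*} [Fintype A] [TopologicalSpace A] [DiscreteTopology A]
    (X : Set (ℤ → A)) (hX : IsMinimalSubshift X) (c : A → ℝ) :
    IsLetterCoboundary X c ↔
      ∃ ρ : A → ℝ, ∀ a b : A, [a, b] ∈ langOf X → c a = ρ b - ρ a :=
  letterCoboundary_iff_exists_rho_general X hX c

end SAdicPaper
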